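/- Let E = F_2^4 and let S = {S_1, S_2, S_3, S_4} be four pairwise trivially intersecting 2-dimensional subspaces of E. Let M_S be the paving q-matroid of rank 2 with ρ(U) = 1 for U ∈ S and ρ(U) = min{dim U, 2} otherwise. Then for every m > 1 there is no F_2-linear rank-metric code C ⊆ F_2^{4×m} with M_S = M[C]. -/

import Mathlib

open Matrix

variable {F : Type*} [Field F]

/-- Column space of a matrix: the span of its columns. -/
def colSpace {n m : ℕ} (M : Matrix (Fin n) (Fin m) F) : Submodule F (Fin n → F) :=
  Submodule.span F (Set.range Mᵀ)

lemma colSpace_le_iff {n m : ℕ} (M : Matrix (Fin n) (Fin m) F) (U : Submodule F (Fin n → F)) :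
    colSpace M ≤ U ↔ ∀ j, Mᵀ j ∈ U := by
  rw [colSpace, Submodule.span_le]; exact Set.range_subset_iff

/-- `C(U)`: the codewords of `C` whose column space is contained in `U`. -/
def codeCU {n m : ℕ} (C : Submodule F (Matrix (Fin n) (Fin m) F))
    (U : Submodule F (Fin n → F)) : Submodule F (Matrix (Fin n) (Fin m) F) where
  carrier := {M | M ∈ C ∧ colSpace M ≤ U}
  add_mem' := by
    rintro a b ⟨haC, ha⟩ ⟨hbC, hb⟩
    refine ⟨C.add_mem haC hbC, (colSpace_le_iff _ _).2 fun j => ?_⟩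
    have h := U.add_mem ((colSpace_le_iff a U).1 ha j) ((colSpace_le_iff b U).1 hb j)
    exact h
  zero_mem' := by
    exact ⟨C.zero_mem, (colSpace_le_iff _ _).2 fun j => U.zero_mem⟩
  smul_mem' := by
    rintro c a ⟨haC, ha⟩
    refine ⟨C.smul_mem c haC, (colSpace_le_iff _ _).2 fun j => ?_⟩
    have h := U.smul_mem c ((colSpace_le_iff a U).1 ha j)
    exact h

/-- Orthogonal complement with respect to the standard (dot-product) bilinear form. -/
def perp {n : ℕ} (U : Submodule F (Fin n → F)) : Submodule F (Fin n → F) where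
  carrier := {v | ∀ u ∈ U, v ⬝ᵥ u = 0}
  add_mem' := by
    intro a b ha hb u hu
    rw [add_dotProduct, ha u hu, hb u hu, add_zero]
  zero_mem' := by
    intro u hu
    rw [zero_dotProduct]
  smul_mem' := by
    intro c a ha u hu
    rw [smul_dotProduct, ha u hu, smul_zero]

/-- The minimum rank distance of a matrix code. -/
noncomputable def minRankDist {n m : ℕ} (C : Submodule F (Matrix (Fin n) (Fin m) F)) : ℕ :=
  sInf {r : ℕ | ∃ M ∈ C, M ≠ 0 ∧ M.rank = r}

/-- The rank function of the q-polymatroid associated to a matrix rank-metric code. -/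
noncomputable def rhoCode {n m : ℕ} (C : Submodule F (Matrix (Fin n) (Fin m) F))
    (U : Submodule F (Fin n → F)) : ℚ :=
  ((Module.finrank F C : ℚ) - (Module.finrank F (codeCU C (perp U)) : ℚ)) / (m : ℚ)

/-!
Put `T i = (S i)ᗮ`. The ranks of `E` and of `S i` force `dim C = 2m` and `dim C(T i) = m`; as the
`T i` are pairwise complementary, `C = C(T i) ⊕ C(T j)` for `i ≠ j`. In characteristic 2 the fifth
plane `W` of the spread through `T 0, …, T 3` meets every `T i` trivially, so `ρ(Wᗮ) = 2` and
`C(W) = 0`. Splitting `x ∈ C(T 0)` as `x = b + y = c + z` with `b, c ∈ C(T 1)`, `y ∈ C(T 2)`,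
`z ∈ C(T 3)`, every column of `x - b - c` lies in `W`, hence `x = b + c ∈ C(T 0) ∩ C(T 1) = 0`.
So `m = dim C(T 0) = 0`; but then `ρ` is identically `0` (division by zero), not `1` on `S i`.
-/

open Module Function

section Perp

variable {n : ℕ}

lemma perp_eq_comap_dualAnnihilator (U : Submodule F (Fin n → F)) :
    perp U = U.dualAnnihilator.comap (dotProductEquiv F (Fin n)).toLinearMap := by
  ext
  simp [perp, Submodule.mem_dualAnnihilator]

lemma finrank_perp_add_finrank (U : Submodule F (Fin n → F)) :
    finrank F (perp U) + finrank F U = n := by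
  rw [perp_eq_comap_dualAnnihilator, Submodule.comap_equiv_eq_map_symm,
    LinearEquiv.finrank_map_eq, add_comm, Subspace.finrank_add_finrank_dualAnnihilator_eq,
    finrank_fin_fun]

lemma finrank_perp (U : Submodule F (Fin n → F)) : finrank F (perp U) = n - finrank F U := by
  have := finrank_perp_add_finrank U
  omega

lemma perp_perp (U : Submodule F (Fin n → F)) : perp (perp U) = U := by
  refine (Submodule.eq_of_le_of_finrank_eq (fun u hu v hv => ?_) ?_).symm
  · rw [dotProduct_comm]
    exact hv u hu
  · have := finrank_perp_add_finrank U
    have := finrank_perp_add_finrank (perp U)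
    omega

lemma perp_sup (U V : Submodule F (Fin n → F)) : perp (U ⊔ V) = perp U ⊓ perp V := by
  simp only [perp_eq_comap_dualAnnihilator, Submodule.dualAnnihilator_sup_eq, Submodule.comap_inf]

lemma perp_bot : perp (⊥ : Submodule F (Fin n → F)) = ⊤ :=
  eq_top_iff.2 fun v _ u hu => by rw [(Submodule.mem_bot F).1 hu, dotProduct_zero]

lemma perp_top : perp (⊤ : Submodule F (Fin n → F)) = ⊥ := by
  rw [← perp_bot, perp_perp]

lemma disjoint_perp {U V : Submodule F (Fin n → F)} (h : Disjoint U V)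
    (hdim : n ≤ finrank F U + finrank F V) : Disjoint (perp U) (perp V) := by
  rw [disjoint_iff, ← perp_sup, Submodule.eq_top_of_disjoint U V (by rwa [finrank_fin_fun]) h,
    perp_top]

end Perp

section Code

variable {n m : ℕ} {C : Submodule F (Matrix (Fin n) (Fin m) F)} {U V : Submodule F (Fin n → F)}

lemma mem_codeCU {M : Matrix (Fin n) (Fin m) F} : M ∈ codeCU C U ↔ M ∈ C ∧ ∀ j, Mᵀ j ∈ U :=
  and_congr_right' (colSpace_le_iff M U)

lemma codeCU_le : codeCU C U ≤ C := fun _ hM => hM.1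

lemma codeCU_inf : codeCU C (U ⊓ V) = codeCU C U ⊓ codeCU C V := by
  ext M
  simp only [Submodule.mem_inf, mem_codeCU, forall_and]
  tauto

lemma codeCU_bot : codeCU C ⊥ = ⊥ := by
  refine eq_bot_iff.2 fun M hM => (Submodule.mem_bot F).2 ?_
  ext i j
  simpa using congrFun ((Submodule.mem_bot F).1 ((mem_codeCU.1 hM).2 j)) i

lemma disjoint_codeCU (h : Disjoint U V) : Disjoint (codeCU C U) (codeCU C V) := by
  rw [disjoint_iff, ← codeCU_inf, h.eq_bot, codeCU_bot]

lemma le_codeCU_sup_codeCU (h : Disjoint U V)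
    (hdim : finrank F C ≤ finrank F (codeCU C U) + finrank F (codeCU C V)) :
    C ≤ codeCU C U ⊔ codeCU C V := by
  have := Submodule.finrank_sup_add_finrank_inf_eq (codeCU C U) (codeCU C V)
  rw [(disjoint_codeCU h).eq_bot, finrank_bot] at this
  exact (Submodule.eq_of_le_of_finrank_le (sup_le codeCU_le codeCU_le) (by omega)).ge

lemma finrank_codeCU_perp_add (hm : m ≠ 0) {k : ℕ} (h : rhoCode C U = k) :
    finrank F (codeCU C (perp U)) + k * m = finrank F C := by
  rw [rhoCode, div_eq_iff (Nat.cast_ne_zero.2 hm)] at h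
  exact_mod_cast (by linarith : (finrank F (codeCU C (perp U)) : ℚ) + k * m = finrank F C)

lemma finrank_eq_of_rhoCode_top (hm : m ≠ 0) {k : ℕ} (h : rhoCode C ⊤ = k) :
    finrank F C = k * m := by
  have := finrank_codeCU_perp_add hm h
  rwa [perp_top, codeCU_bot, finrank_bot, zero_add, eq_comm] at this

lemma codeCU_eq_bot_of_rhoCode_perp (hm : m ≠ 0) {k : ℕ} (hC : finrank F C = k * m)
    (h : rhoCode C (perp U) = k) : codeCU C U = ⊥ := by
  have := finrank_codeCU_perp_add hm h
  rw [perp_perp] at this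
  exact Submodule.finrank_eq_zero.1 (by omega)

end Code

section Spread

variable {K V : Type*} [Ring K] [AddCommGroup V] [Module K V]

/-- When `T 2 = {a - α₂ a}` and `T 3 = {a - α₃ a}` are graphs of maps `α₂, α₃ : T 0 → T 1`, this is
`{a - α₂ a - α₃ a}`, the fifth plane `S₅ᗮ` of the paper. -/
def spreadCompletion (T : Fin 4 → Submodule K V) : Submodule K V where
  carrier := {v | ∃ a ∈ T 0, ∃ b ∈ T 1, ∃ c ∈ T 1, a - b ∈ T 2 ∧ a - c ∈ T 3 ∧ a - b - c = v}
  add_mem' := by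
    rintro _ _ ⟨a, ha, b, hb, c, hc, hab, hac, rfl⟩ ⟨a', ha', b', hb', c', hc', hab', hac', rfl⟩
    refine ⟨a + a', add_mem ha ha', b + b', add_mem hb hb', c + c', add_mem hc hc', ?_, ?_, ?_⟩
    · convert add_mem hab hab' using 1; abel
    · convert add_mem hac hac' using 1; abel
    · abel
  zero_mem' := ⟨0, zero_mem _, 0, zero_mem _, 0, zero_mem _, by simp, by simp, by simp⟩
  smul_mem' := by
    rintro r _ ⟨a, ha, b, hb, c, hc, hab, hac, rfl⟩
    refine ⟨r • a, Submodule.smul_mem _ r ha, r • b, Submodule.smul_mem _ r hb,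
      r • c, Submodule.smul_mem _ r hc, ?_, ?_, ?_⟩
    · simpa [smul_sub] using Submodule.smul_mem _ r hab
    · simpa [smul_sub] using Submodule.smul_mem _ r hac
    · simp [smul_sub]

lemma disjoint_spreadCompletion [CharP K 2] {T : Fin 4 → Submodule K V}
    (hT : Pairwise (Disjoint on T)) (i : Fin 4) : Disjoint (spreadCompletion T) (T i) := by
  have eq_zero (i j : Fin 4) (hij : i ≠ j) {x : V} (hi : x ∈ T i) (hj : x ∈ T j) : x = 0 :=
    Submodule.disjoint_def.1 (hT hij) x hi hj
  rw [Submodule.disjoint_def]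
  rintro _ ⟨a, ha, b, hb, c, hc, hab, hac, rfl⟩ hv
  suffices a = 0 by
    subst this
    rw [zero_sub, neg_mem_iff] at hab hac
    simp [eq_zero 1 2 (by decide) hb hab, eq_zero 1 3 (by decide) hc hac]
  fin_cases i <;> simp only [Fin.reduceFinMk, Fin.zero_eta, Fin.mk_one, Fin.isValue] at hv
  · have hbc : b + c = 0 :=
      eq_zero 0 1 (by decide) (by convert sub_mem ha hv using 1; abel) (add_mem hb hc)
    have hcb : c = b := by
      rw [eq_neg_of_add_eq_zero_right hbc, neg_eq_iff_add_eq_zero, ← two_smul K,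
        CharTwo.two_eq_zero, zero_smul]
    rw [hcb] at hac
    have hab0 := eq_zero 2 3 (by decide) hab hac
    rw [sub_eq_zero] at hab0
    exact eq_zero 0 1 (by decide) ha (hab0 ▸ hb)
  · refine eq_zero 0 1 (by decide) ha ?_
    convert add_mem (add_mem hv hb) hc using 1; abel
  · have hc0 : c = 0 := eq_zero 1 2 (by decide) hc (by convert sub_mem hab hv using 1; abel)
    rw [hc0, sub_zero] at hac
    exact eq_zero 0 3 (by decide) ha hac
  · have hb0 : b = 0 := eq_zero 1 3 (by decide) hb (by convert sub_mem hac hv using 1; abel)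
    rw [hb0, sub_zero] at hab
    exact eq_zero 0 2 (by decide) ha hab

lemma spreadCompletion_ne [CharP K 2] {T : Fin 4 → Submodule K V} (hT : Pairwise (Disjoint on T))
    {i : Fin 4} (hTi : T i ≠ ⊥) : spreadCompletion T ≠ T i :=
  fun h => hTi (disjoint_self.1 (h ▸ disjoint_spreadCompletion hT i))

end Spread

section SpreadCode

variable {n m : ℕ} {C : Submodule F (Matrix (Fin n) (Fin m) F)}
  {T : Fin 4 → Submodule F (Fin n → F)}

lemma codeCU_eq_bot_of_codeCU_spreadCompletion_eq_bot
    (h01 : Disjoint (T 0) (T 1)) (h2 : C ≤ codeCU C (T 1) ⊔ codeCU C (T 2))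
    (h3 : C ≤ codeCU C (T 1) ⊔ codeCU C (T 3)) (hW : codeCU C (spreadCompletion T) = ⊥) :
    codeCU C (T 0) = ⊥ := by
  refine eq_bot_iff.2 fun x hx => ?_
  obtain ⟨b, hb, y, hy, hby⟩ := Submodule.mem_sup.1 (h2 (codeCU_le hx))
  obtain ⟨c, hc, z, hz, hcz⟩ := Submodule.mem_sup.1 (h3 (codeCU_le hx))
  have hx' := mem_codeCU.1 hx
  have hb' := mem_codeCU.1 hb
  have hc' := mem_codeCU.1 hc
  have hW' : x - b - c ∈ codeCU C (spreadCompletion T) := by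
    refine mem_codeCU.2 ⟨sub_mem (sub_mem hx'.1 hb'.1) hc'.1, fun j => ?_⟩
    refine ⟨_, hx'.2 j, _, hb'.2 j, _, hc'.2 j, ?_, ?_, by ext; simp⟩
    · convert (mem_codeCU.1 hy).2 j using 1; ext; simp [← hby]
    · convert (mem_codeCU.1 hz).2 j using 1; ext; simp [← hcz]
  rw [hW, Submodule.mem_bot, sub_sub, sub_eq_zero] at hW'
  exact (disjoint_codeCU h01).le_bot ⟨hx, hW' ▸ add_mem hb hc⟩

lemma eq_zero_of_codeCU_spreadCompletion_eq_bot (hT : Pairwise (Disjoint on T))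
    (hC : finrank F C = 2 * m) (hCT : ∀ i, finrank F (codeCU C (T i)) = m)
    (hW : codeCU C (spreadCompletion T) = ⊥) :
    m = 0 := by
  have hsup (i j : Fin 4) (hij : i ≠ j) : C ≤ codeCU C (T i) ⊔ codeCU C (T j) :=
    le_codeCU_sup_codeCU (hT hij) (by rw [hC, hCT, hCT]; omega)
  have hT0 := codeCU_eq_bot_of_codeCU_spreadCompletion_eq_bot (hT (by decide : (0 : Fin 4) ≠ 1))
    (hsup 1 2 (by decide)) (hsup 1 3 (by decide)) hW
  rw [← hCT 0, hT0, finrank_bot]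

end SpreadCode

open scoped Classical in
theorem four_planes_qmatroid_not_multilinear_general
    (S : Fin 4 → Submodule (ZMod 2) (Fin 4 → ZMod 2))
    (hdim : ∀ i, Module.finrank (ZMod 2) (S i) = 2)
    (hdisj : ∀ i j, i ≠ j → S i ⊓ S j = ⊥)
    (m : ℕ) :
    ¬ ∃ C : Submodule (ZMod 2) (Matrix (Fin 4) (Fin m) (ZMod 2)),
        ∀ U : Submodule (ZMod 2) (Fin 4 → ZMod 2),
          rhoCode C U = if (∃ i, U = S i) then 1
            else ((min (Module.finrank (ZMod 2) U) 2 : ℕ) : ℚ) := by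
  rintro ⟨C, hC⟩
  have hρS (i : Fin 4) : rhoCode C (S i) = (1 : ℕ) := by
    rw [hC, if_pos ⟨i, rfl⟩, Nat.cast_one]
  have hρ (U : Submodule (ZMod 2) (Fin 4 → ZMod 2)) (hU : ∀ i, U ≠ S i)
      (h2 : 2 ≤ finrank (ZMod 2) U) : rhoCode C U = (2 : ℕ) := by
    rw [hC, if_neg (not_exists.2 hU), min_eq_right h2]
  have hm : m ≠ 0 := by
    rintro rfl
    simpa [rhoCode] using hρS 0
  set T : Fin 4 → Submodule (ZMod 2) (Fin 4 → ZMod 2) := fun i => perp (S i)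
  have hTdim (i : Fin 4) : finrank (ZMod 2) (T i) = 2 := by
    rw [finrank_perp, hdim]
  have hT : Pairwise (Disjoint on T) := fun i j hij =>
    disjoint_perp (disjoint_iff.2 (hdisj i j hij)) (by rw [hdim, hdim])
  have hdimC : finrank (ZMod 2) C = 2 * m := by
    exact finrank_eq_of_rhoCode_top hm (hρ ⊤ (fun i h => absurd (h ▸ hdim i) (by simp)) (by simp))
  have hdimCT (i : Fin 4) : finrank (ZMod 2) (codeCU C (T i)) = m := by
    have : finrank (ZMod 2) (codeCU C (T i)) + 1 * m = finrank (ZMod 2) C :=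
      finrank_codeCU_perp_add hm (hρS i)
    omega
  have hW : codeCU C (spreadCompletion T) = ⊥ := by
    refine codeCU_eq_bot_of_rhoCode_perp hm hdimC (hρ _ (fun i h => ?_) ?_)
    · exact spreadCompletion_ne hT (Submodule.one_le_finrank_iff.1 (by rw [hTdim i]; decide))
        ((perp_perp _).symm.trans (congrArg perp h))
    · have := Submodule.finrank_add_finrank_le_of_disjoint (disjoint_spreadCompletion hT 1)
      rw [hTdim, finrank_fin_fun] at this
      rw [finrank_perp]
      omega
  exact hm (eq_zero_of_codeCU_spreadCompletion_eq_bot hT hdimC hdimCT hW)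

open scoped Classical in
/-- the paving q-matroid on `F_2^4` induced by four pairwise trivially
intersecting 2-spaces is not `m`-multilinear for any `m > 1`. -/
theorem four_planes_qmatroid_not_multilinear
    (S : Fin 4 → Submodule (ZMod 2) (Fin 4 → ZMod 2))
    (hdim : ∀ i, Module.finrank (ZMod 2) (S i) = 2)
    (hdisj : ∀ i j, i ≠ j → S i ⊓ S j = ⊥)
    (m : ℕ) (hm : 1 < m) :
    ¬ ∃ C : Submodule (ZMod 2) (Matrix (Fin 4) (Fin m) (ZMod 2)),
        ∀ U : Submodule (ZMod 2) (Fin 4 → ZMod 2),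
          rhoCode C U = if (∃ i, U = S i) then 1
            else ((min (Module.finrank (ZMod 2) U) 2 : ℕ) : ℚ) :=
  four_planes_qmatroid_not_multilinear_general S hdim hdisj m
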